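/- If R is a weakly generalized p.q.-Baer *-ring, then the involution of R is quasi-proper: x R x* = 0 implies x^n = 0 for some n ∈ ℕ. -/
import Mathlib


variable {R : Type*} [NonUnitalRing R] [StarRing R]

/-- A projection in a `*`-ring: a self-adjoint idempotent. -/
def IsProj (e : R) : Prop := e * e = e ∧ star e = e

/-- A central element. -/
def IsCentral (e : R) : Prop := ∀ r : R, e * r = r * e

/-- The order on projections: `e ≤ f` iff `e = e * f`. -/
def projLE (e f : R) : Prop := e * f = e

/-- `npow1 x n = x ^ (n + 1)` in a possibly non-unital ring. -/
def npow1 (x : R) : ℕ → R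
  | 0 => x
  | n + 1 => npow1 x n * x

/-- `chain x n f = (x * f 0) * (x * f 1) * ⋯ * (x * f n)`, a typical generator of `(xR)^(n+1)`. -/
def chain (x : R) : ℕ → (ℕ → R) → R
  | 0, f => x * f 0
  | n + 1, f => chain x n f * (x * f (n + 1))

/-- A weakly generalized p.q.-Baer `*`-ring: for every `x` there are a central projection `e`
and `n ≥ 1` with `x ^ n * e = x ^ n` and, for all `y`, `(xR)^n y = 0` iff `e * y = 0`. -/
def IsWeaklyGenPQBaerStar (S : Type*) [NonUnitalRing S] [StarRing S] : Prop :=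
  ∀ x : S, ∃ (e : S) (n : ℕ), IsProj e ∧ IsCentral e ∧ npow1 x n * e = npow1 x n ∧
    ∀ y : S, (∀ f : ℕ → S, chain x n f * y = 0) ↔ e * y = 0

/-- the involution of a weakly generalized p.q.-Baer `*`-ring is quasi-proper. -/
theorem stmt4 (h : IsWeaklyGenPQBaerStar R) (x : R) (hx : ∀ r : R, x * r * star x = 0) :
    ∃ n : ℕ, npow1 x n = 0 := by
  obtain ⟨e, n, ⟨_, hes⟩, hc, hxe, hann⟩ := h x
  have hchain : ∀ f : ℕ → R, chain x n f * star x = 0 := by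
    intro f
    cases n with
    | zero => simpa [chain] using hx (f 0)
    | succ m =>
      show chain x m f * (x * f (m + 1)) * star x = 0
      rw [mul_assoc, mul_assoc] at *
      rw [← mul_assoc x (f (m+1)) (star x), hx (f (m+1)), mul_zero]
  have hestar : e * star x = 0 := (hann (star x)).mp hchain
  have hxe0 : x * e = 0 := by
    have := congrArg star hestar
    simpa [star_mul, hes] using this
  refine ⟨n, ?_⟩
  cases n with
  | zero => rw [← hxe]; simpa [npow1] using hxe0
  | succ m =>
    rw [← hxe]
    show npow1 x m * x * e = 0
    rw [mul_assoc, hxe0, mul_zero]
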